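/- arXiv:1809.03986 — 2 statements merged into one kernel-verified Lean document; each statement's English description precedes it below -/
import Mathlib

section
/- Fix a measurable set S ⊆ ℝ^d of positive Lebesgue measure and x ∈ ℝ^d. For every ν ∈ ℝ^d and symmetric positive definite T ∈ ℝ^{d×d}, the function ℓ(·,·;x) is differentiable in the joint variable (T^♭, ν) and its gradient equals ∇ℓ(ν,T;x) = −t(x) + E_{z ∼ N(T⁻¹ν, T⁻¹, S)}[t(z)]. -/
open MeasureTheory ProbabilityTheory Matrix Real

noncomputable section

/-- Euclidean norm of a vector in `ℝ^d`. -/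
def vnorm {d : ℕ} (x : Fin d → ℝ) : ℝ := Real.sqrt (∑ i, x i ^ 2)

/-- Frobenius norm of a `d × d` real matrix. -/
def fnorm {d : ℕ} (A : Matrix (Fin d) (Fin d) ℝ) : ℝ := Real.sqrt (∑ i, ∑ j, A i j ^ 2)

/-- Density of the `d`-variate normal distribution `N(μ, Σ)`. -/
def gpdf {d : ℕ} (μ : Fin d → ℝ) (Sg : Matrix (Fin d) (Fin d) ℝ) (x : Fin d → ℝ) : ℝ :=
  (Real.sqrt ((2 * Real.pi) ^ d * Sg.det))⁻¹ *
    Real.exp (-(1 / 2) * ((x - μ) ⬝ᵥ (Sg⁻¹ *ᵥ (x - μ))))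

/-- The `d`-variate normal distribution `N(μ, Σ)` as a measure on `ℝ^d`. -/
def gauss {d : ℕ} (μ : Fin d → ℝ) (Sg : Matrix (Fin d) (Fin d) ℝ) : Measure (Fin d → ℝ) :=
  volume.withDensity fun x => ENNReal.ofReal (gpdf μ Sg x)

/-- The `S`-truncated normal distribution `N(μ, Σ, S)`: the normal `N(μ, Σ)`
conditioned on taking values in `S`. -/
def truncGauss {d : ℕ} (μ : Fin d → ℝ) (Sg : Matrix (Fin d) (Fin d) ℝ)
    (S : Set (Fin d → ℝ)) : Measure (Fin d → ℝ) :=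
  ProbabilityTheory.cond (gauss μ Sg) S

/-- Mean vector of a measure on `ℝ^d`. -/
def meanv {d : ℕ} (P : Measure (Fin d → ℝ)) : Fin d → ℝ := fun i => ∫ x, x i ∂P

/-- Covariance matrix of a measure on `ℝ^d`. -/
def covm {d : ℕ} (P : Measure (Fin d → ℝ)) : Matrix (Fin d) (Fin d) ℝ :=
  Matrix.of fun i j => ∫ x, (x i - meanv P i) * (x j - meanv P j) ∂P

/-- Single-sample negative log-likelihood of the truncated-normal model. -/
def negLogLik {d : ℕ} (S : Set (Fin d → ℝ)) (ν : Fin d → ℝ)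
    (T : Matrix (Fin d) (Fin d) ℝ) (x : Fin d → ℝ) : ℝ :=
  (1 / 2) * (x ⬝ᵥ (T *ᵥ x)) - x ⬝ᵥ ν +
    Real.log (∫ z in S, Real.exp (-(1 / 2) * (z ⬝ᵥ (T *ᵥ z)) + z ⬝ᵥ ν))

/-- Pairing of the joint statistic `t(z) = ((−(1/2) z zᵀ)^♭, z)` with a direction `(U, w)`:
`⟨t(z), (U^♭, w)⟩ = −(1/2) zᵀUz + zᵀw`.  Stating the gradient through all these pairings is
equivalent to identifying the gradient vector itself. -/
def tPair {d : ℕ} (U : Matrix (Fin d) (Fin d) ℝ) (w : Fin d → ℝ) (z : Fin d → ℝ) : ℝ :=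
  -(1 / 2) * (z ⬝ᵥ (U *ᵥ z)) + z ⬝ᵥ w


/-!
The truncated normal family is an exponential family with natural parameter `θ = (T^♭, ν)` and
sufficient statistic `t`, so `ℓ(θ; x) = -⟨t(x), θ⟩ + log Z(θ)` with
`Z(θ) = ∫_S exp ⟨t(z), θ⟩ dz`. Near a positive definite `T` the functions
`exp ⟨t(z), θ⟩ (1 + ‖z‖²)` are dominated by one Gaussian in `z`, so `Z` can be differentiated
under the integral sign: `∇ log Z(θ) = Z(θ)⁻¹ ∫_S exp ⟨t(z), θ⟩ t(z) dz`. Completing the square,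
the density of `N(T⁻¹ν, T⁻¹)` is a constant multiple of `exp ⟨t(z), θ⟩`, so this is the mean
of `t` under `N(T⁻¹ν, T⁻¹, S)`.
-/

lemma abs_dotProduct_le {n : Type*} [Fintype n] (v w : n → ℝ) :
    |v ⬝ᵥ w| ≤ Fintype.card n * ‖v‖ * ‖w‖ := by
  calc |v ⬝ᵥ w| ≤ ∑ i, |v i * w i| := Finset.abs_sum_le_sum_abs _ _
    _ ≤ ∑ _i : n, ‖v‖ * ‖w‖ := by
        gcongr with i
        rw [abs_mul]
        exact mul_le_mul (norm_le_pi_norm v i) (norm_le_pi_norm w i) (abs_nonneg _) (norm_nonneg _)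
    _ = Fintype.card n * ‖v‖ * ‖w‖ := by simp [mul_assoc]

lemma norm_of_mulVec_le {n : Type*} [Fintype n] (U : n → n → ℝ) (v : n → ℝ) :
    ‖Matrix.of U *ᵥ v‖ ≤ Fintype.card n * ‖U‖ * ‖v‖ := by
  refine (pi_norm_le_iff_of_nonneg (by positivity)).2 fun i => ?_
  calc ‖(Matrix.of U *ᵥ v) i‖ = |U i ⬝ᵥ v| := rfl
    _ ≤ Fintype.card n * ‖U i‖ * ‖v‖ := abs_dotProduct_le _ _
    _ ≤ Fintype.card n * ‖U‖ * ‖v‖ := by gcongr; exact norm_le_pi_norm U i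

theorem Matrix.PosDef.exists_pos_mul_sq_norm_le {n : Type*} [Fintype n] {T : Matrix n n ℝ}
    (hT : T.PosDef) : ∃ c > 0, ∀ z : n → ℝ, c * ‖z‖ ^ 2 ≤ z ⬝ᵥ (T *ᵥ z) := by
  rcases subsingleton_or_nontrivial (n → ℝ) with h | h
  · exact ⟨1, one_pos, fun z => by simp [Subsingleton.elim z 0]⟩
  have hq : Continuous fun z : n → ℝ => z ⬝ᵥ (T *ᵥ z) := by fun_prop
  obtain ⟨z₀, hz₀, hmin⟩ := (isCompact_sphere (0 : n → ℝ) 1).exists_isMinOn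
    (NormedSpace.sphere_nonempty.2 zero_le_one) hq.continuousOn
  have hz₀ne : z₀ ≠ 0 := ne_zero_of_mem_unit_sphere ⟨z₀, hz₀⟩
  refine ⟨_, hT.dotProduct_mulVec_pos hz₀ne, fun z => ?_⟩
  rcases eq_or_ne z 0 with rfl | hz
  · simp
  have hn : 0 < ‖z‖ := norm_pos_iff.2 hz
  have hu : ‖z‖⁻¹ • z ∈ Metric.sphere (0 : n → ℝ) 1 := by
    simp [norm_smul, hn.ne']
  have h : z₀ ⬝ᵥ (T *ᵥ z₀) ≤ _ := hmin hu
  simp only [mulVec_smul, smul_dotProduct, dotProduct_smul, smul_eq_mul] at h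
  calc z₀ ⬝ᵥ (T *ᵥ z₀) * ‖z‖ ^ 2 ≤ ‖z‖⁻¹ * (‖z‖⁻¹ * z ⬝ᵥ (T *ᵥ z)) * ‖z‖ ^ 2 := by gcongr
    _ = z ⬝ᵥ (T *ᵥ z) := by field_simp

theorem integrable_exp_neg_mul_sq_norm_pi {n : Type*} [Fintype n] {a : ℝ} (ha : 0 < a) :
    Integrable fun z : n → ℝ => exp (-a * ‖z‖ ^ 2) := by
  obtain ⟨N, hN⟩ : ∃ N : ℕ, Fintype.card n = N := ⟨_, rfl⟩
  have hprod : Integrable fun z : n → ℝ => ∏ i, exp (-(a / N) * z i ^ 2) :=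
    Integrable.fintype_prod (f := fun _ t => exp (-(a / N) * t ^ 2)) fun i =>
      integrable_exp_neg_mul_sq (div_pos ha (by simpa [← hN] using Fintype.card_pos_iff.2 ⟨i⟩))
  refine hprod.mono (by fun_prop) (ae_of_all _ fun z => ?_)
  have hsq : ∀ i, z i ^ 2 ≤ ‖z‖ ^ 2 := fun i => by
    simpa [Real.norm_eq_abs, sq_abs] using pow_le_pow_left₀ (norm_nonneg _) (norm_le_pi_norm z i) 2
  have hNa : N * (a / N) ≤ a := by
    rcases N.eq_zero_or_pos with rfl | h
    · simp [ha.le]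
    · rw [mul_div_cancel₀ _ (by positivity)]
  have hsum : ∑ i, a / N * z i ^ 2 ≤ a * ‖z‖ ^ 2 := calc
    ∑ i, a / N * z i ^ 2 ≤ ∑ _i : n, a / N * ‖z‖ ^ 2 :=
        Finset.sum_le_sum fun i _ => mul_le_mul_of_nonneg_left (hsq i) (by positivity)
    _ = N * (a / N) * ‖z‖ ^ 2 := by simp [hN]; ring
    _ ≤ a * ‖z‖ ^ 2 := by gcongr
  simp only [Real.norm_eq_abs, abs_exp, ← exp_sum, neg_mul, Finset.sum_neg_distrib]
  gcongr

lemma one_add_sq_mul_exp_le {a : ℝ} (ha : 0 < a) (C t : ℝ) :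
    (1 + t ^ 2) * exp (-a * t ^ 2 + C) ≤ (1 + 2 / a) * exp C * exp (-(a / 2) * t ^ 2) := by
  have hpoly : 1 + t ^ 2 ≤ (1 + 2 / a) * (a / 2 * t ^ 2 + 1) := by
    have : 0 ≤ 2 / a := by positivity
    nlinarith [sq_nonneg t, mul_div_cancel₀ (2 : ℝ) ha.ne']
  calc (1 + t ^ 2) * exp (-a * t ^ 2 + C)
      ≤ (1 + 2 / a) * exp (a / 2 * t ^ 2) * exp (-a * t ^ 2 + C) := by
        gcongr
        exact hpoly.trans (by gcongr; exact add_one_le_exp _)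
    _ = (1 + 2 / a) * exp C * exp (-(a / 2) * t ^ 2) := by
        rw [mul_assoc, ← exp_add, mul_assoc, ← exp_add]; ring_nf

theorem integral_cond_withDensity_ofReal {α : Type*} [MeasurableSpace α] {μ : Measure α}
    [SFinite μ] {s : Set α} {f : α → ℝ} (hf_meas : Measurable f) (hf_nonneg : 0 ≤ f)
    (hf_int : IntegrableOn f s μ) (g : α → ℝ) :
    ∫ x, g x ∂(μ.withDensity fun x => ENNReal.ofReal (f x))[|s] =
      (∫ x in s, f x ∂μ)⁻¹ * ∫ x in s, f x * g x ∂μ := by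
  rw [ProbabilityTheory.cond, integral_smul_measure, withDensity_apply' _ s,
    ← ofReal_integral_eq_lintegral_ofReal hf_int (ae_of_all _ hf_nonneg), restrict_withDensity' s,
    integral_withDensity_eq_integral_toReal_smul hf_meas.ennreal_ofReal
      (ae_of_all _ fun _ => ENNReal.ofReal_lt_top), ENNReal.toReal_inv,
    ENNReal.toReal_ofReal (integral_nonneg hf_nonneg), smul_eq_mul]
  simp only [ENNReal.toReal_ofReal (hf_nonneg _), smul_eq_mul]

abbrev NatParam (d : ℕ) : Type := (Fin d → Fin d → ℝ) × (Fin d → ℝ)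

def tPairCLM {d : ℕ} (z : Fin d → ℝ) : NatParam d →L[ℝ] ℝ :=
  LinearMap.toContinuousLinearMap
    { toFun := fun p => tPair (Matrix.of p.1) p.2 z
      map_add' := fun p q => by
        simp only [tPair, Prod.fst_add, Prod.snd_add, ← of_add_of, add_mulVec, dotProduct_add]
        ring
      map_smul' := fun r p => by
        simp only [tPair, Prod.smul_fst, Prod.smul_snd, ← smul_of, smul_mulVec, dotProduct_smul,
          smul_eq_mul, RingHom.id_apply]
        ring }

section NatParam

variable {d : ℕ}

@[simp]
lemma tPairCLM_apply (z : Fin d → ℝ) (p : NatParam d) :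
    tPairCLM z p = tPair (Matrix.of p.1) p.2 z := rfl

@[fun_prop]
lemma continuous_tPairCLM : Continuous (tPairCLM (d := d)) :=
  continuous_clm_apply.2 fun p => by simp only [tPairCLM_apply, tPair]; fun_prop

lemma norm_tPairCLM_le (z : Fin d → ℝ) : ‖tPairCLM z‖ ≤ d ^ 2 * (1 + ‖z‖ ^ 2) := by
  refine ContinuousLinearMap.opNorm_le_bound _ (by positivity) fun p => ?_
  have hdot := abs_dotProduct_le z (Matrix.of p.1 *ᵥ z)
  have hmul := norm_of_mulVec_le p.1 z
  have hlin := abs_dotProduct_le z p.2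
  simp only [Fintype.card_fin] at hdot hmul hlin
  have hquad : |z ⬝ᵥ (Matrix.of p.1 *ᵥ z)| ≤ d ^ 2 * ‖z‖ ^ 2 * ‖p‖ := calc
    _ ≤ d * ‖z‖ * (d * ‖p‖ * ‖z‖) :=
        hdot.trans (by gcongr; exact hmul.trans (by gcongr; exact norm_fst_le p))
    _ = d ^ 2 * ‖z‖ ^ 2 * ‖p‖ := by ring
  replace hlin : |z ⬝ᵥ p.2| ≤ d * ‖z‖ * ‖p‖ := hlin.trans (by gcongr; exact norm_snd_le p)
  have hd : (d : ℝ) ≤ d ^ 2 := by exact_mod_cast Nat.le_self_pow two_ne_zero d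
  rw [tPairCLM_apply, tPair, Real.norm_eq_abs]
  calc |-(1 / 2) * z ⬝ᵥ (Matrix.of p.1 *ᵥ z) + z ⬝ᵥ p.2|
      ≤ 1 / 2 * |z ⬝ᵥ (Matrix.of p.1 *ᵥ z)| + |z ⬝ᵥ p.2| := by
        refine (abs_add_le _ _).trans ?_
        rw [abs_mul]; norm_num
    _ ≤ 1 / 2 * (d ^ 2 * ‖z‖ ^ 2 * ‖p‖) + d * ‖z‖ * ‖p‖ := by gcongr
    _ ≤ d ^ 2 * (1 + ‖z‖ ^ 2) * ‖p‖ := by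
        have h1 : (d : ℝ) * ‖z‖ ≤ d ^ 2 * (1 + ‖z‖ ^ 2) / 2 := by
          nlinarith [sq_nonneg (‖z‖ - 1), norm_nonneg z, sq_nonneg (d : ℝ)]
        nlinarith [norm_nonneg p, sq_nonneg (d : ℝ), sq_nonneg ‖z‖]

lemma norm_exp_smul_tPairCLM_le (z : Fin d → ℝ) (p : NatParam d) :
    ‖exp (tPairCLM z p) • tPairCLM z‖ ≤ d ^ 2 * (exp (tPairCLM z p) * (1 + ‖z‖ ^ 2)) := by
  rw [norm_smul, Real.norm_eq_abs, abs_exp, mul_left_comm]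
  gcongr
  exact norm_tPairCLM_le z

variable {T : Matrix (Fin d) (Fin d) ℝ}

lemma exists_tPairCLM_le_of_posDef (hT : T.PosDef) (ν : Fin d → ℝ) :
    ∃ ε > 0, ∃ a > 0, ∃ C, ∀ p ∈ Metric.ball (Matrix.of.symm T, ν) ε, ∀ z : Fin d → ℝ,
      tPairCLM z p ≤ -a * ‖z‖ ^ 2 + C := by
  obtain ⟨c, hc, hcoer⟩ := hT.exists_pos_mul_sq_norm_le
  set b : ℝ := d * ‖ν‖
  refine ⟨c / (4 * (d ^ 2 + 1)), by positivity, c / 8, by positivity, c / 4 + 2 * b ^ 2 / c,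
    fun p hp z => ?_⟩
  have hcenter : tPairCLM z (Matrix.of.symm T, ν) ≤ -(c / 2) * ‖z‖ ^ 2 + b * ‖z‖ := by
    have hlin := (le_abs_self _).trans (abs_dotProduct_le z ν)
    simp only [Fintype.card_fin] at hlin
    simp only [tPairCLM_apply, tPair, Equiv.apply_symm_apply]
    nlinarith [hcoer z]
  have hpert : tPairCLM z (p - (Matrix.of.symm T, ν)) ≤ c / 4 * (1 + ‖z‖ ^ 2) := calc
    _ ≤ ‖tPairCLM z‖ * ‖p - (Matrix.of.symm T, ν)‖ :=
        (le_abs_self _).trans ((tPairCLM z).le_opNorm _)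
    _ ≤ d ^ 2 * (1 + ‖z‖ ^ 2) * (c / (4 * (d ^ 2 + 1))) := by
        gcongr
        · exact norm_tPairCLM_le z
        · exact (dist_eq_norm p _ ▸ Metric.mem_ball.1 hp).le
    _ ≤ c / 4 * (1 + ‖z‖ ^ 2) := by
        rw [mul_comm, ← mul_assoc]
        gcongr
        rw [div_mul_eq_mul_div, div_le_iff₀ (by positivity)]
        nlinarith
  have hsplit : tPairCLM z p =
      tPairCLM z (Matrix.of.symm T, ν) + tPairCLM z (p - (Matrix.of.symm T, ν)) := by
    rw [map_sub]; ring
  have hyoung : b * ‖z‖ ≤ c / 8 * ‖z‖ ^ 2 + 2 * b ^ 2 / c := by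
    rw [← sub_nonneg]
    have h : c / 8 * ‖z‖ ^ 2 + 2 * b ^ 2 / c - b * ‖z‖ = (c * ‖z‖ - 4 * b) ^ 2 / (8 * c) := by
      field_simp
      ring
    rw [h]
    positivity
  nlinarith

lemma exists_integrable_bound_of_posDef (hT : T.PosDef) (ν : Fin d → ℝ) :
    ∃ ε > 0, ∃ bound : (Fin d → ℝ) → ℝ, Integrable bound ∧
      ∀ p ∈ Metric.ball (Matrix.of.symm T, ν) ε, ∀ z : Fin d → ℝ,
        exp (tPairCLM z p) * (1 + ‖z‖ ^ 2) ≤ bound z := by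
  obtain ⟨ε, hε, a, ha, C, hle⟩ := exists_tPairCLM_le_of_posDef hT ν
  refine ⟨ε, hε, fun z => (1 + 2 / a) * exp C * exp (-(a / 2) * ‖z‖ ^ 2),
    (integrable_exp_neg_mul_sq_norm_pi (by positivity)).const_mul _, fun p hp z => ?_⟩
  calc exp (tPairCLM z p) * (1 + ‖z‖ ^ 2) ≤ (1 + ‖z‖ ^ 2) * exp (-a * ‖z‖ ^ 2 + C) := by
        rw [mul_comm]; gcongr; exact hle p hp z
    _ ≤ _ := one_add_sq_mul_exp_le ha C ‖z‖

def partitionFn (S : Set (Fin d → ℝ)) (p : NatParam d) : ℝ := ∫ z in S, exp (tPairCLM z p)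

lemma negLogLik_eq (S : Set (Fin d → ℝ)) (x : Fin d → ℝ) (p : NatParam d) :
    negLogLik S p.2 (Matrix.of p.1) x = -tPairCLM x p + log (partitionFn S p) := by
  simp only [negLogLik, partitionFn, tPairCLM_apply, tPair]
  ring

lemma integrable_exp_tPairCLM (hT : T.PosDef) (ν : Fin d → ℝ) :
    Integrable fun z => exp (tPairCLM z (Matrix.of.symm T, ν)) := by
  obtain ⟨ε, hε, bound, hbound, hle⟩ := exists_integrable_bound_of_posDef hT ν
  refine hbound.mono' (by fun_prop) (ae_of_all _ fun z => ?_)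
  rw [Real.norm_eq_abs, abs_exp]
  refine le_trans ?_ (hle _ (Metric.mem_ball_self hε) z)
  exact le_mul_of_one_le_right (exp_pos _).le (by nlinarith [sq_nonneg ‖z‖])

lemma integrable_exp_smul_tPairCLM (hT : T.PosDef) (ν : Fin d → ℝ) :
    Integrable fun z => exp (tPairCLM z (Matrix.of.symm T, ν)) • tPairCLM z := by
  obtain ⟨ε, hε, bound, hbound, hle⟩ := exists_integrable_bound_of_posDef hT ν
  refine (hbound.const_mul (d ^ 2)).mono' (by fun_prop) (ae_of_all _ fun z => ?_)
  exact (norm_exp_smul_tPairCLM_le z _).trans (by gcongr; exact hle _ (Metric.mem_ball_self hε) z)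

theorem hasFDerivAt_partitionFn (S : Set (Fin d → ℝ)) (hT : T.PosDef) (ν : Fin d → ℝ) :
    HasFDerivAt (partitionFn S)
      (∫ z in S, exp (tPairCLM z (Matrix.of.symm T, ν)) • tPairCLM z) (Matrix.of.symm T, ν) := by
  obtain ⟨ε, hε, bound, hbound, hle⟩ := exists_integrable_bound_of_posDef hT ν
  refine hasFDerivAt_integral_of_dominated_of_fderiv_le (Metric.ball_mem_nhds _ hε)
    (Filter.Eventually.of_forall fun p => by fun_prop) (integrable_exp_tPairCLM hT ν).restrict
    (by fun_prop) (ae_of_all _ fun z p hp => (norm_exp_smul_tPairCLM_le z p).trans ?_)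
    (hbound.const_mul (d ^ 2)).restrict
    (ae_of_all _ fun z p _ => (hasDerivAt_exp _).comp_hasFDerivAt p (tPairCLM z).hasFDerivAt)
  gcongr
  exact hle p hp z

lemma partitionFn_pos {S : Set (Fin d → ℝ)} (hS : 0 < volume S) {p : NatParam d}
    (hint : IntegrableOn (fun z => exp (tPairCLM z p)) S) : 0 < partitionFn S p :=
  have : NeZero (volume S) := ⟨hS.ne'⟩
  integral_exp_pos hint

end NatParam

section Gaussian

variable {d : ℕ} {T : Matrix (Fin d) (Fin d) ℝ}

lemma exists_gpdf_inv_mulVec_eq (hT : T.PosDef) (ν : Fin d → ℝ) :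
    ∃ K > 0, ∀ z, gpdf (T⁻¹ *ᵥ ν) T⁻¹ z = K * exp (tPair T ν z) := by
  have hdet : IsUnit T.det := isUnit_iff_ne_zero.2 hT.det_pos.ne'
  have hTμ : T *ᵥ (T⁻¹ *ᵥ ν) = ν := by rw [mulVec_mulVec, mul_nonsing_inv T hdet, one_mulVec]
  have hμT : (T⁻¹ *ᵥ ν) ᵥ* T = ν := by
    rw [← mulVec_transpose, (isHermitian_iff_isSymm.1 hT.isHermitian).eq, hTμ]
  refine ⟨(√((2 * π) ^ d * T⁻¹.det))⁻¹ * exp (-(1 / 2) * ((T⁻¹ *ᵥ ν) ⬝ᵥ ν)), ?_, fun z => ?_⟩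
  · have := hT.inv.det_pos
    positivity
  have hquad : (z - T⁻¹ *ᵥ ν) ⬝ᵥ (T *ᵥ (z - T⁻¹ *ᵥ ν)) =
      z ⬝ᵥ (T *ᵥ z) - 2 * z ⬝ᵥ ν + (T⁻¹ *ᵥ ν) ⬝ᵥ ν := by
    rw [mulVec_sub, dotProduct_sub, sub_dotProduct, sub_dotProduct, hTμ,
      dotProduct_mulVec (T⁻¹ *ᵥ ν), hμT, dotProduct_comm _ ν]
    ring
  rw [gpdf, nonsing_inv_nonsing_inv T hdet, hquad, mul_assoc, ← exp_add, tPair]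
  ring_nf

theorem integral_truncGauss_inv_mulVec (S : Set (Fin d → ℝ)) (hT : T.PosDef) (ν : Fin d → ℝ)
    (g : (Fin d → ℝ) → ℝ) :
    ∫ z, g z ∂truncGauss (T⁻¹ *ᵥ ν) T⁻¹ S = (partitionFn S (Matrix.of.symm T, ν))⁻¹ *
      ∫ z in S, exp (tPairCLM z (Matrix.of.symm T, ν)) * g z := by
  obtain ⟨K, hK, hpdf⟩ := exists_gpdf_inv_mulVec_eq hT ν
  have hgauss : gauss (T⁻¹ *ᵥ ν) T⁻¹ =
      volume.withDensity fun z => ENNReal.ofReal (K * exp (tPairCLM z (Matrix.of.symm T, ν))) := by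
    simp only [gauss, hpdf, tPairCLM_apply, Equiv.apply_symm_apply]
  rw [truncGauss, hgauss, integral_cond_withDensity_ofReal (by fun_prop) (fun z => by positivity)
    ((integrable_exp_tPairCLM hT ν).restrict.const_mul K)]
  simp_rw [mul_assoc, integral_const_mul, partitionFn]
  rw [mul_inv, mul_mul_mul_comm, inv_mul_cancel₀ hK.ne', one_mul]

end Gaussian

theorem statement2_general {d : ℕ} (S : Set (Fin d → ℝ))
    (hpos : 0 < volume S) (x : Fin d → ℝ)
    (ν : Fin d → ℝ) (T : Matrix (Fin d) (Fin d) ℝ) (hT : T.PosDef) :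
    ∃ L : ((Fin d → Fin d → ℝ) × (Fin d → ℝ)) →L[ℝ] ℝ,
      HasFDerivAt
        (fun p : (Fin d → Fin d → ℝ) × (Fin d → ℝ) => negLogLik S p.2 (Matrix.of p.1) x)
        L (Matrix.of.symm T, ν) ∧
      ∀ (U : Matrix (Fin d) (Fin d) ℝ) (w : Fin d → ℝ),
        L (Matrix.of.symm U, w) =
          -(tPair U w x) + ∫ z, tPair U w z ∂(truncGauss (T⁻¹ *ᵥ ν) T⁻¹ S) := by
  set p₀ : NatParam d := (Matrix.of.symm T, ν)
  have hZpos : 0 < partitionFn S p₀ := partitionFn_pos hpos (integrable_exp_tPairCLM hT ν).restrict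
  refine ⟨-tPairCLM x + (partitionFn S p₀)⁻¹ • ∫ z in S, exp (tPairCLM z p₀) • tPairCLM z,
    ?_, fun U w => ?_⟩
  · simp only [negLogLik_eq]
    exact (tPairCLM x).hasFDerivAt.neg.add
      ((hasDerivAt_log hZpos.ne').comp_hasFDerivAt p₀ (hasFDerivAt_partitionFn S hT ν))
  · have hDZ := ContinuousLinearMap.integral_apply
      ((integrable_exp_smul_tPairCLM hT ν).restrict (s := S)) (Matrix.of.symm U, w)
    simp only [tPairCLM_apply, Equiv.apply_symm_apply] at hDZ
    rw [integral_truncGauss_inv_mulVec S hT ν]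
    simp [hDZ, p₀]

/-- Fix a measurable `S ⊆ ℝ^d` of positive Lebesgue measure and `x ∈ ℝ^d`.
For every `ν` and symmetric positive definite `T`, `ℓ(·,·;x)` is differentiable in the joint
variable `(T^♭, ν)` and its gradient is `−t(x) + E_{z ∼ N(T⁻¹ν, T⁻¹, S)}[t(z)]`, i.e. the
derivative in any direction `(U^♭, w)` equals
`−⟨t(x),(U^♭,w)⟩ + E_{z ∼ N(T⁻¹ν, T⁻¹, S)}[⟨t(z),(U^♭,w)⟩]`. -/
theorem statement2 {d : ℕ} (S : Set (Fin d → ℝ)) (hS : MeasurableSet S)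
    (hpos : 0 < volume S) (x : Fin d → ℝ)
    (ν : Fin d → ℝ) (T : Matrix (Fin d) (Fin d) ℝ) (hT : T.PosDef) (hTsymm : T.IsSymm) :
    ∃ L : ((Fin d → Fin d → ℝ) × (Fin d → ℝ)) →L[ℝ] ℝ,
      HasFDerivAt
        (fun p : (Fin d → Fin d → ℝ) × (Fin d → ℝ) => negLogLik S p.2 (Matrix.of p.1) x)
        L (Matrix.of.symm T, ν) ∧
      ∀ (U : Matrix (Fin d) (Fin d) ℝ) (w : Fin d → ℝ),
        L (Matrix.of.symm U, w) =
          -(tPair U w x) + ∫ z, tPair U w z ∂(truncGauss (T⁻¹ *ᵥ ν) T⁻¹ S) :=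
  statement2_general S hpos x ν T hT
end
end

section
/- Let Σ ∈ ℝ^{d×d} be symmetric positive definite. For every symmetric U ∈ ℝ^{d×d} and every v ∈ ℝ^d, Var_{z∼N(0,Σ)}[−(1/2) zᵀUz + vᵀz] ≥ (1/2) λ_m(Σ) (‖U‖_F² + ‖v‖₂²). Consequently, in the untruncated case S = ℝ^d, the Hessian of the negative log-likelihood ℓ at any parameter (ν,T) with ν = 0, restricted to directions (U^♭, v) with U symmetric, is bounded below by (1/2) λ_m(T⁻¹) times the identity quadratic form. -/
open MeasureTheory ProbabilityTheory Matrix Real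

noncomputable section

/-- The minimum eigenvalue `λ_m(Σ) = min{ min_{i,j} λ_i λ_j , min_i λ_i }` of the fourth
moment tensor of `N(0,Σ)`, where `λ₁,…,λ_d` are the eigenvalues of the Hermitian matrix `Σ`. -/
def lambdaM {d : ℕ} (Sg : Matrix (Fin d) (Fin d) ℝ) (hSg : Sg.IsHermitian) : ℝ :=
  min (⨅ p : Fin d × Fin d, hSg.eigenvalues p.1 * hSg.eigenvalues p.2)
    (⨅ i, hSg.eigenvalues i)

/-! Choose `M` with `M Mᵀ = Σ` and `Mᵀ U M = diag D` (any factor `R Rᵀ = Σ`, followed by an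
orthogonal diagonalisation of `Rᵀ U R`). If `g` is standard normal then `z = M g ∼ N(0,Σ)`, and
the statistic becomes `∑ᵢ (−½ Dᵢ gᵢ² + cᵢ gᵢ)` with `c = Mᵀ v`, a sum of independent terms.
Since `Var(a g² + b g) = 2a² + b²` for `g ∼ N(0,1)`, the variance is `½ tr((UΣ)²) + vᵀΣv`.
For an orthogonal eigenvector matrix `Q` of `Σ`, these two terms are `∑ λᵢλⱼ Wᵢⱼ²` and
`∑ λᵢ wᵢ²` with `W = QᵀUQ`, `w = Qᵀv` of the same norms as `U`, `v`, so they are at least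
`λ_m ‖U‖_F²` and `λ_m ‖v‖²`. -/

open scoped NNReal

section StandardGaussian

lemma integrable_pow_gaussianReal (μ : ℝ) (v : ℝ≥0) (n : ℕ) :
    Integrable (fun x => x ^ n) (gaussianReal μ v) :=
  (memLp_id_gaussianReal (μ := μ) (v := v) n).integrable_norm_pow'.mono' (by fun_prop)
    (ae_of_all _ fun x => (norm_pow x n).le)

lemma integral_pow_gaussianReal_of_odd (v : ℝ≥0) {n : ℕ} (hn : Odd n) :
    ∫ x, x ^ n ∂gaussianReal 0 v = 0 := by
  have h := integral_map (μ := gaussianReal 0 v) (f := fun x : ℝ => x ^ n) (φ := fun x => -x)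
    (by fun_prop) (by fun_prop)
  rw [gaussianReal_map_neg, neg_zero] at h
  simp only [hn.neg_pow, integral_neg] at h
  linarith

lemma integral_sq_gaussianReal (v : ℝ≥0) : ∫ x, x ^ 2 ∂gaussianReal 0 v = v := by
  rw [← variance_of_integral_eq_zero aemeasurable_id' integral_id_gaussianReal,
    variance_fun_id_gaussianReal]

lemma integral_pow_four_gaussianReal : ∫ x, x ^ 4 ∂gaussianReal 0 1 = 3 := by
  have hline : ∫ x, x ^ 4 * exp (-(1 / 2) * x ^ 2)
      = 2 * ∫ x in Set.Ioi (0 : ℝ), x ^ (4 : ℝ) * exp (-(1 / 2) * x ^ (2 : ℝ)) := by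
    have h := integral_comp_abs (f := fun x => x ^ 4 * exp (-(1 / 2) * x ^ 2))
    simp only [(show Even 4 by decide).pow_abs, sq_abs] at h
    rw [h]
    norm_cast
  have hhalf : ∫ x in Set.Ioi (0 : ℝ), x ^ (4 : ℝ) * exp (-(1 / 2) * x ^ (2 : ℝ))
      = (1 / 2) ^ (-(4 + 1) / 2 : ℝ) * (1 / 2) * Gamma ((4 + 1) / 2) :=
    integral_rpow_mul_exp_neg_mul_rpow (by norm_num) (by norm_num) (by norm_num)
  have hGamma : Gamma ((4 + 1) / 2) = 3 * √π / 4 := by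
    have h := Real.Gamma_nat_add_half 2
    norm_num at h ⊢
    exact h
  have hpow : (1 / 2 : ℝ) ^ (-(4 + 1) / 2 : ℝ) = 4 * √2 := by
    rw [show (-(4 + 1) / 2 : ℝ) = -(2 + 1 / 2) by norm_num, Real.rpow_neg (by norm_num),
      Real.div_rpow zero_le_one zero_le_two, Real.one_rpow, one_div, inv_inv,
      Real.rpow_add two_pos, ← Real.sqrt_eq_rpow]
    norm_num
  have hdensity : ∀ x : ℝ, gaussianPDFReal 0 1 x • x ^ 4
      = (√(2 * π))⁻¹ * (x ^ 4 * exp (-(1 / 2) * x ^ 2)) := fun x => by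
    simp only [gaussianPDFReal, smul_eq_mul, NNReal.coe_one, mul_one, sub_zero]
    ring_nf
  rw [integral_gaussianReal_eq_integral_smul one_ne_zero]
  simp_rw [hdensity]
  rw [integral_const_mul, hline, hhalf, hGamma, hpow, Real.sqrt_mul zero_le_two]
  field_simp

lemma memLp_quadratic_gaussianReal (μ : ℝ) (v : ℝ≥0) (a b : ℝ) :
    MemLp (fun x => a * x ^ 2 + b * x) 2 (gaussianReal μ v) := by
  have I := integrable_pow_gaussianReal μ v
  rw [memLp_two_iff_integrable_sq (by fun_prop)]
  have hsq : (fun x : ℝ => (a * x ^ 2 + b * x) ^ 2)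
      = fun x => a ^ 2 * x ^ 4 + 2 * a * b * x ^ 3 + b ^ 2 * x ^ 2 := by
    ext x; ring
  rw [hsq]
  fun_prop

lemma variance_quadratic_gaussianReal (a b : ℝ) :
    Var[fun x => a * x ^ 2 + b * x; gaussianReal 0 1] = 2 * a ^ 2 + b ^ 2 := by
  have I := integrable_pow_gaussianReal 0 1
  have I1 : Integrable (fun x => x) (gaussianReal 0 1) := by simpa using I 1
  have hsq : (fun x : ℝ => (a * x ^ 2 + b * x) ^ 2)
      = fun x => a ^ 2 * x ^ 4 + 2 * a * b * x ^ 3 + b ^ 2 * x ^ 2 := by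
    ext x; ring
  rw [variance_eq_sub (memLp_quadratic_gaussianReal 0 1 a b), Pi.pow_def, hsq, integral_add,
    integral_add, integral_add]
  · simp only [integral_const_mul, integral_pow_four_gaussianReal, integral_sq_gaussianReal,
      integral_pow_gaussianReal_of_odd 1 (by decide : Odd 3)]
    rw [integral_const_mul, integral_id_gaussianReal]
    push_cast
    ring
  all_goals first | exact I1.const_mul b | fun_prop

lemma pi_gaussianReal_eq_withDensity {ι : Type*} [Fintype ι] (μ : ι → ℝ) {v : ι → ℝ≥0}
    (hv : ∀ i, v i ≠ 0) :
    Measure.pi (fun i => gaussianReal (μ i) (v i))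
      = volume.withDensity fun x => ENNReal.ofReal (∏ i, gaussianPDFReal (μ i) (v i) (x i)) := by
  refine Measure.pi_eq fun s hs => ?_
  rw [withDensity_apply _ (MeasurableSet.univ_pi hs), volume_pi, Measure.restrict_pi_pi,
    ← ofReal_integral_eq_lintegral_ofReal,
    integral_fintype_prod_eq_prod (f := fun i => gaussianPDFReal (μ i) (v i)),
    ENNReal.ofReal_prod_of_nonneg]
  · exact Finset.prod_congr rfl fun i _ => (gaussianReal_apply_eq_integral _ (hv i) _).symm
  · exact fun i _ => setIntegral_nonneg_of_ae (ae_of_all _ fun x => gaussianPDFReal_nonneg _ _ _)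
  · exact Integrable.fintype_prod fun i => (integrable_gaussianPDFReal _ _).restrict
  · exact ae_of_all _ fun x => Finset.prod_nonneg fun i _ => gaussianPDFReal_nonneg _ _ _

end StandardGaussian

section LinearAlgebra

variable {n : Type*} [Fintype n]

lemma Matrix.det_ne_zero_of_mul_transpose_eq [DecidableEq n] {M Sg : Matrix n n ℝ}
    (hSg : Sg.PosDef) (hM : M * Mᵀ = Sg) : M.det ≠ 0 := fun h => by
  have hdet := hSg.det_pos
  rw [← hM, det_mul, det_transpose, h, zero_mul] at hdet
  exact lt_irrefl _ hdet

open scoped MatrixOrder in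
lemma Matrix.PosDef.exists_mul_transpose_eq [DecidableEq n] {Sg : Matrix n n ℝ}
    (hSg : Sg.PosDef) : ∃ M : Matrix n n ℝ, M * Mᵀ = Sg := by
  obtain ⟨B, hB⟩ := CStarAlgebra.nonneg_iff_eq_star_mul_self.mp hSg.posSemidef.nonneg
  refine ⟨Bᵀ, ?_⟩
  rw [transpose_transpose, hB, star_eq_conjTranspose, conjTranspose_eq_transpose_of_trivial]

lemma Matrix.PosDef.exists_mul_transpose_eq_and_diagonal [DecidableEq n] {Sg U : Matrix n n ℝ}
    (hSg : Sg.PosDef) (hU : U.IsSymm) :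
    ∃ (M : Matrix n n ℝ) (D : n → ℝ), M * Mᵀ = Sg ∧ Mᵀ * U * M = diagonal D := by
  obtain ⟨R, hR⟩ := hSg.exists_mul_transpose_eq
  have hW : (Rᵀ * U * R).IsHermitian := by
    rw [IsHermitian, conjTranspose_eq_transpose_of_trivial, transpose_mul, transpose_mul,
      transpose_transpose, hU.eq, Matrix.mul_assoc]
  set P : Matrix n n ℝ := (hW.eigenvectorUnitary : Matrix n n ℝ)
  have hPP : P * Pᵀ = 1 := by
    simpa [P, star_eq_conjTranspose] using Unitary.coe_mul_star_self hW.eigenvectorUnitary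
  have hdiag : Pᵀ * (Rᵀ * U * R) * P = diagonal hW.eigenvalues := by
    simpa [P, star_eq_conjTranspose] using hW.conjStarAlgAut_star_eigenvectorUnitary
  refine ⟨R * P, hW.eigenvalues, ?_, ?_⟩
  · rw [transpose_mul, Matrix.mul_assoc, ← Matrix.mul_assoc P, hPP, Matrix.one_mul, hR]
  · rw [← hdiag, transpose_mul]
    simp only [Matrix.mul_assoc]

lemma Matrix.IsHermitian.eq_eigenvectorUnitary_mul [DecidableEq n] {Sg : Matrix n n ℝ}
    (hSg : Sg.IsHermitian) :
    Sg = (hSg.eigenvectorUnitary : Matrix n n ℝ) * diagonal hSg.eigenvalues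
      * (hSg.eigenvectorUnitary : Matrix n n ℝ)ᵀ := by
  simpa [star_eq_conjTranspose] using hSg.spectral_theorem

lemma Matrix.IsHermitian.eigenvectorUnitary_transpose_mul [DecidableEq n] {Sg : Matrix n n ℝ}
    (hSg : Sg.IsHermitian) :
    (hSg.eigenvectorUnitary : Matrix n n ℝ)ᵀ * (hSg.eigenvectorUnitary : Matrix n n ℝ) = 1 := by
  simpa [star_eq_conjTranspose] using Unitary.coe_star_mul_self hSg.eigenvectorUnitary

lemma Matrix.IsHermitian.eigenvectorUnitary_mul_transpose [DecidableEq n] {Sg : Matrix n n ℝ}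
    (hSg : Sg.IsHermitian) :
    (hSg.eigenvectorUnitary : Matrix n n ℝ) * (hSg.eigenvectorUnitary : Matrix n n ℝ)ᵀ = 1 := by
  simpa [star_eq_conjTranspose] using Unitary.coe_mul_star_self hSg.eigenvectorUnitary

lemma Matrix.trace_mul_mul_transpose_of_transpose_mul_eq_one [DecidableEq n] {Q : Matrix n n ℝ}
    (hQ : Qᵀ * Q = 1) (A : Matrix n n ℝ) : (Q * A * Qᵀ).trace = A.trace := by
  rw [trace_mul_comm, ← Matrix.mul_assoc, hQ, Matrix.one_mul]

lemma Matrix.IsSymm.sum_sq_eq_trace {A : Matrix n n ℝ} (hA : A.IsSymm) :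
    ∑ i, ∑ j, A i j ^ 2 = (A * A).trace := by
  simp only [trace, diag, mul_apply, sq]
  exact Finset.sum_congr rfl fun i _ => Finset.sum_congr rfl fun j _ => by rw [hA.apply i j]

lemma Matrix.IsHermitian.le_trace_mul_mul [DecidableEq n] {Sg U : Matrix n n ℝ}
    (hSg : Sg.IsHermitian) (hU : U.IsSymm) {c : ℝ}
    (hc : ∀ i j, c ≤ hSg.eigenvalues i * hSg.eigenvalues j) :
    c * ∑ i, ∑ j, U i j ^ 2 ≤ (U * Sg * (U * Sg)).trace := by
  set Q : Matrix n n ℝ := (hSg.eigenvectorUnitary : Matrix n n ℝ)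
  set ev := hSg.eigenvalues
  have hQ : Qᵀ * Q = 1 := hSg.eigenvectorUnitary_transpose_mul
  have hQ' : Q * Qᵀ = 1 := hSg.eigenvectorUnitary_mul_transpose
  set W := Qᵀ * U * Q
  have hUW : U = Q * W * Qᵀ := by
    simp only [W, ← Matrix.mul_assoc, hQ', Matrix.one_mul]
    simp only [Matrix.mul_assoc, hQ', Matrix.mul_one]
  have hW : W.IsSymm := by
    simp only [W, IsSymm, transpose_mul, transpose_transpose, hU.eq, Matrix.mul_assoc]
  have hfro : ∑ i, ∑ j, U i j ^ 2 = ∑ i, ∑ j, W i j ^ 2 := by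
    rw [hU.sum_sq_eq_trace, hW.sum_sq_eq_trace, hUW,
      show Q * W * Qᵀ * (Q * W * Qᵀ) = Q * (W * W) * Qᵀ by
        simp only [Matrix.mul_assoc, ← Matrix.mul_assoc Qᵀ Q, hQ, Matrix.one_mul],
      trace_mul_mul_transpose_of_transpose_mul_eq_one hQ]
  have htr : (U * Sg * (U * Sg)).trace = ∑ i, ∑ j, ev i * ev j * W i j ^ 2 := by
    rw [hUW, hSg.eq_eigenvectorUnitary_mul,
      show Q * W * Qᵀ * (Q * diagonal ev * Qᵀ) * (Q * W * Qᵀ * (Q * diagonal ev * Qᵀ))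
        = Q * (W * diagonal ev * (W * diagonal ev)) * Qᵀ by
        simp only [Matrix.mul_assoc, ← Matrix.mul_assoc Qᵀ Q, hQ, Matrix.one_mul],
      trace_mul_mul_transpose_of_transpose_mul_eq_one hQ]
    simp only [trace, diag, mul_apply, diagonal_apply, mul_ite, mul_zero, Finset.sum_ite_eq',
      Finset.mem_univ, if_true]
    refine Finset.sum_congr rfl fun i _ => Finset.sum_congr rfl fun j _ => ?_
    rw [hW.apply j i]
    ring
  rw [hfro, htr, Finset.mul_sum]
  refine Finset.sum_le_sum fun i _ => ?_
  rw [Finset.mul_sum]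
  exact Finset.sum_le_sum fun j _ => mul_le_mul_of_nonneg_right (hc i j) (sq_nonneg _)

lemma Matrix.IsHermitian.le_dotProduct_mulVec [DecidableEq n] {Sg : Matrix n n ℝ}
    (hSg : Sg.IsHermitian) {c : ℝ} (hc : ∀ i, c ≤ hSg.eigenvalues i) (v : n → ℝ) :
    c * ∑ i, v i ^ 2 ≤ v ⬝ᵥ (Sg *ᵥ v) := by
  set Q : Matrix n n ℝ := (hSg.eigenvectorUnitary : Matrix n n ℝ)
  have hnorm : ∑ i, v i ^ 2 = ∑ i, (Qᵀ *ᵥ v) i ^ 2 := by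
    have h : v ⬝ᵥ v = (Qᵀ *ᵥ v) ⬝ᵥ (Qᵀ *ᵥ v) := by
      nth_rewrite 1 [mulVec_transpose]
      rw [← dotProduct_mulVec, mulVec_mulVec, hSg.eigenvectorUnitary_mul_transpose, one_mulVec]
    simpa [dotProduct, sq] using h
  have hquad : v ⬝ᵥ (Sg *ᵥ v) = ∑ i, hSg.eigenvalues i * (Qᵀ *ᵥ v) i ^ 2 := by
    conv_lhs => rw [hSg.eq_eigenvectorUnitary_mul]
    rw [← mulVec_mulVec, ← mulVec_mulVec, dotProduct_mulVec, ← mulVec_transpose]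
    simp only [mulVec_diagonal, dotProduct]
    exact Finset.sum_congr rfl fun i _ => by ring
  rw [hnorm, hquad, Finset.mul_sum]
  exact Finset.sum_le_sum fun i _ => mul_le_mul_of_nonneg_right (hc i) (sq_nonneg _)

end LinearAlgebra

section Gauss

variable {d : ℕ}

lemma continuous_gpdf (μ : Fin d → ℝ) (Sg : Matrix (Fin d) (Fin d) ℝ) :
    Continuous (gpdf μ Sg) := by
  unfold gpdf; fun_prop

lemma abs_det_mul_gpdf_mulVec {M : Matrix (Fin d) (Fin d) ℝ} (hM : M.det ≠ 0)
    (x : Fin d → ℝ) : |M.det| * gpdf 0 (M * Mᵀ) (M *ᵥ x) = ∏ i, gaussianPDFReal 0 1 (x i) := by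
  have hquad : (M *ᵥ x) ⬝ᵥ ((M * Mᵀ)⁻¹ *ᵥ (M *ᵥ x)) = ∑ i, x i ^ 2 := by
    have hMT : IsUnit Mᵀ.det := by rw [det_transpose]; exact hM.isUnit
    rw [Matrix.mul_inv_rev, ← mulVec_mulVec, show M⁻¹ *ᵥ (M *ᵥ x) = x by
        rw [mulVec_mulVec, nonsing_inv_mul _ hM.isUnit, one_mulVec],
      ← vecMul_transpose, ← dotProduct_mulVec, mulVec_mulVec, mul_nonsing_inv _ hMT, one_mulVec]
    simp [dotProduct, sq]
  have hdet : (2 * π) ^ d * (M * Mᵀ).det = (√(2 * π) ^ d * |M.det|) ^ 2 := by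
    rw [det_mul, det_transpose, mul_pow (√(2 * π) ^ d), ← pow_mul, mul_comm d 2, pow_mul,
      Real.sq_sqrt (by positivity), sq_abs, sq]
  have habs : |M.det| ≠ 0 := abs_ne_zero.mpr hM
  simp only [gpdf, gaussianPDFReal, sub_zero, hquad, hdet, Real.sqrt_sq (by positivity :
    (0 : ℝ) ≤ √(2 * π) ^ d * |M.det|)]
  rw [Finset.mul_sum, Real.exp_sum, Finset.prod_mul_distrib, Finset.prod_const, Finset.card_univ,
    Fintype.card_fin]
  simp only [NNReal.coe_one, mul_one, neg_div, div_eq_inv_mul (x _ ^ 2), ← neg_mul, one_div,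
    inv_pow]
  field_simp

lemma gauss_mul_transpose_eq_map {M : Matrix (Fin d) (Fin d) ℝ} (hM : M.det ≠ 0) :
    gauss 0 (M * Mᵀ) = (Measure.pi fun _ : Fin d => gaussianReal 0 1).map (M *ᵥ ·) := by
  have hL : (M *ᵥ ·) = ⇑(toLin' M) := funext fun x => (toLin'_apply M x).symm
  have hLm : Measurable (M *ᵥ ·) := by fun_prop
  have hg : Measurable fun y => ENNReal.ofReal (gpdf 0 (M * Mᵀ) y) :=
    (continuous_gpdf 0 _).measurable.ennreal_ofReal
  ext s hs
  rw [Measure.map_apply hLm hs, pi_gaussianReal_eq_withDensity _ fun _ => one_ne_zero,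
    withDensity_apply _ (hLm hs)]
  simp_rw [← abs_det_mul_gpdf_mulVec hM, ENNReal.ofReal_mul (abs_nonneg _)]
  rw [lintegral_const_mul' _ _ ENNReal.ofReal_ne_top, ← setLIntegral_map hs hg hLm, hL,
    Real.map_matrix_volume_pi_eq_smul_volume_pi hM, Measure.restrict_smul, lintegral_smul_measure,
    smul_eq_mul, ← mul_assoc, ← ENNReal.ofReal_mul (abs_nonneg _), ← abs_mul, mul_inv_cancel₀ hM,
    abs_one, ENNReal.ofReal_one, one_mul, gauss, withDensity_apply _ hs]

lemma isProbabilityMeasure_gauss {Sg : Matrix (Fin d) (Fin d) ℝ} (hSg : Sg.PosDef) :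
    IsProbabilityMeasure (gauss 0 Sg) := by
  obtain ⟨M, rfl⟩ := hSg.exists_mul_transpose_eq
  rw [gauss_mul_transpose_eq_map (det_ne_zero_of_mul_transpose_eq hSg rfl)]
  exact Measure.isProbabilityMeasure_map (by fun_prop)

theorem variance_gauss_quadratic {Sg U : Matrix (Fin d) (Fin d) ℝ} (hSg : Sg.PosDef)
    (hU : U.IsSymm) (v : Fin d → ℝ) :
    Var[fun z => -(1 / 2) * (z ⬝ᵥ (U *ᵥ z)) + v ⬝ᵥ z; gauss 0 Sg]
      = (1 / 2) * (U * Sg * (U * Sg)).trace + v ⬝ᵥ (Sg *ᵥ v) := by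
  obtain ⟨M, D, rfl, hdiag⟩ := hSg.exists_mul_transpose_eq_and_diagonal hU
  have hsep : (fun z => -(1 / 2) * (z ⬝ᵥ (U *ᵥ z)) + v ⬝ᵥ z) ∘ (M *ᵥ ·)
      = ∑ i, fun g : Fin d → ℝ => (-(1 / 2) * D i) * g i ^ 2 + (Mᵀ *ᵥ v) i * g i := by
    ext g
    have hq : (M *ᵥ g) ⬝ᵥ (U *ᵥ (M *ᵥ g)) = g ⬝ᵥ ((Mᵀ * U * M) *ᵥ g) := by
      rw [← mulVec_mulVec, ← mulVec_mulVec, dotProduct_mulVec g, vecMul_transpose]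
    have hl : v ⬝ᵥ (M *ᵥ g) = (Mᵀ *ᵥ v) ⬝ᵥ g := by
      rw [dotProduct_mulVec, mulVec_transpose]
    rw [Function.comp_apply, hq, hl, hdiag, Finset.sum_apply]
    simp only [mulVec_diagonal, dotProduct, Finset.mul_sum, ← Finset.sum_add_distrib]
    exact Finset.sum_congr rfl fun i _ => by ring
  have htr : (U * (M * Mᵀ) * (U * (M * Mᵀ))).trace = ∑ i, D i ^ 2 := by
    rw [show U * (M * Mᵀ) * (U * (M * Mᵀ)) = U * M * (Mᵀ * U * M * Mᵀ) by
        simp only [Matrix.mul_assoc], trace_mul_comm,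
      show Mᵀ * U * M * Mᵀ * (U * M) = Mᵀ * U * M * (Mᵀ * U * M) by simp only [Matrix.mul_assoc],
      hdiag, diagonal_mul_diagonal, trace_diagonal]
    simp only [sq]
  have hv : v ⬝ᵥ ((M * Mᵀ) *ᵥ v) = ∑ i, (Mᵀ *ᵥ v) i ^ 2 := by
    rw [← mulVec_mulVec, dotProduct_mulVec, ← mulVec_transpose]
    simp only [dotProduct, sq]
  rw [gauss_mul_transpose_eq_map (det_ne_zero_of_mul_transpose_eq hSg rfl),
    variance_map (by fun_prop) (by fun_prop), hsep,
    variance_sum_pi fun i => memLp_quadratic_gaussianReal 0 1 _ _]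
  simp only [variance_quadratic_gaussianReal, htr, hv, Finset.mul_sum, ← Finset.sum_add_distrib]
  ring_nf

lemma lambdaM_le_mul {Sg : Matrix (Fin d) (Fin d) ℝ} (hSg : Sg.IsHermitian) (i j : Fin d) :
    lambdaM Sg hSg ≤ hSg.eigenvalues i * hSg.eigenvalues j :=
  (min_le_left _ _).trans (ciInf_le (Set.finite_range _).bddBelow (i, j))

lemma lambdaM_le {Sg : Matrix (Fin d) (Fin d) ℝ} (hSg : Sg.IsHermitian) (i : Fin d) :
    lambdaM Sg hSg ≤ hSg.eigenvalues i :=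
  (min_le_right _ _).trans (ciInf_le (Set.finite_range _).bddBelow i)

lemma fnorm_sq (A : Matrix (Fin d) (Fin d) ℝ) : fnorm A ^ 2 = ∑ i, ∑ j, A i j ^ 2 :=
  Real.sq_sqrt (by positivity)

lemma vnorm_sq (x : Fin d → ℝ) : vnorm x ^ 2 = ∑ i, x i ^ 2 :=
  Real.sq_sqrt (by positivity)

theorem lambdaM_mul_le_variance_gauss {Sg U : Matrix (Fin d) (Fin d) ℝ} (hSg : Sg.PosDef)
    (hU : U.IsSymm) (v : Fin d → ℝ) :
    (1 / 2) * lambdaM Sg hSg.1 * (fnorm U ^ 2 + vnorm v ^ 2) ≤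
      Var[fun z => -(1 / 2) * (z ⬝ᵥ (U *ᵥ z)) + v ⬝ᵥ z; gauss 0 Sg] := by
  have hquad := hSg.1.le_trace_mul_mul hU (lambdaM_le_mul hSg.1)
  have hlin := hSg.1.le_dotProduct_mulVec (lambdaM_le hSg.1) v
  have hpos : 0 ≤ v ⬝ᵥ (Sg *ᵥ v) := by
    simpa using hSg.posSemidef.dotProduct_mulVec_nonneg v
  rw [variance_gauss_quadratic hSg hU v, fnorm_sq, vnorm_sq]
  linarith

end Gauss

theorem statement6_general {d : ℕ} :
    (∀ (Sg : Matrix (Fin d) (Fin d) ℝ) (hSg : Sg.PosDef)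
      (U : Matrix (Fin d) (Fin d) ℝ), U.IsSymm → ∀ v : Fin d → ℝ,
      (1 / 2) * lambdaM Sg hSg.1 * (fnorm U ^ 2 + vnorm v ^ 2) ≤
        variance (fun z => -(1 / 2) * (z ⬝ᵥ (U *ᵥ z)) + v ⬝ᵥ z) (gauss 0 Sg)) ∧
    (∀ (T : Matrix (Fin d) (Fin d) ℝ) (hT : T.PosDef)
      (U : Matrix (Fin d) (Fin d) ℝ), U.IsSymm → ∀ v : Fin d → ℝ,
      (1 / 2) * lambdaM T⁻¹ hT.inv.1 * (fnorm U ^ 2 + vnorm v ^ 2) ≤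
        variance (fun z => -(1 / 2) * (z ⬝ᵥ (U *ᵥ z)) + v ⬝ᵥ z)
          (truncGauss (T⁻¹ *ᵥ 0) T⁻¹ Set.univ)) := by
  refine ⟨fun Sg hSg U hU v => lambdaM_mul_le_variance_gauss hSg hU v,
    fun T hT U hU v => ?_⟩
  have := isProbabilityMeasure_gauss hT.inv
  rw [truncGauss, mulVec_zero, cond_univ]
  exact lambdaM_mul_le_variance_gauss hT.inv hU v

/-- For symmetric positive definite `Σ`, every symmetric `U` and every `v`,
`Var_{z∼N(0,Σ)}[−(1/2)zᵀUz + vᵀz] ≥ (1/2) λ_m(Σ) (‖U‖_F² + ‖v‖₂²)`.  Consequently, in the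
untruncated case `S = ℝ^d`, the Hessian of the negative log-likelihood at any `(ν,T)` with
`ν = 0` — i.e. the covariance quadratic form of `t(z)` under `N(T⁻¹·0, T⁻¹, ℝ^d)` — restricted
to directions `(U^♭,v)` with `U` symmetric, is bounded below by `(1/2) λ_m(T⁻¹)` times the
identity quadratic form. -/
theorem statement6 {d : ℕ} (hd : 1 ≤ d) :
    (∀ (Sg : Matrix (Fin d) (Fin d) ℝ) (hSg : Sg.PosDef)
      (U : Matrix (Fin d) (Fin d) ℝ), U.IsSymm → ∀ v : Fin d → ℝ,
      (1 / 2) * lambdaM Sg hSg.1 * (fnorm U ^ 2 + vnorm v ^ 2) ≤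
        variance (fun z => -(1 / 2) * (z ⬝ᵥ (U *ᵥ z)) + v ⬝ᵥ z) (gauss 0 Sg)) ∧
    (∀ (T : Matrix (Fin d) (Fin d) ℝ) (hT : T.PosDef)
      (U : Matrix (Fin d) (Fin d) ℝ), U.IsSymm → ∀ v : Fin d → ℝ,
      (1 / 2) * lambdaM T⁻¹ hT.inv.1 * (fnorm U ^ 2 + vnorm v ^ 2) ≤
        variance (fun z => -(1 / 2) * (z ⬝ᵥ (U *ᵥ z)) + v ⬝ᵥ z)
          (truncGauss (T⁻¹ *ᵥ 0) T⁻¹ Set.univ)) :=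
  statement6_general

end
end
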